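/- (Explicit upper bound of the no-arbitrage price interval for a European basket call.) Let m, n ≥ 1, and for each i ∈ {1,…,m} let 0 < D_i < R < U_i, S_i(0) > 0, and b_i = (R − D_i)/(U_i − D_i); assume b_1 ≥ b_2 ≥ … ≥ b_m (set b_0 = 1). Let a_1,…,a_m ≥ 0 and K ≥ 0, and define X : 𝓛^n → ℝ by X(ω) = ( Σ_{i=1}^m a_i·S_i(0)·Π_{k=1}^n ψ_i(ω^k) − K )^+, where ψ_i(S) = U_i if i ∈ S, ψ_i(S) = D_i otherwise, and y^+ = max(y,0). Then max { E_P(X) : P ∈ M_n(b) } = Σ_{k_0+k_1+…+k_m=n, k_j ≥ 0 integers} (n!/(k_0!·k_1!⋯k_m!))·Π_{j=0}^m q*(μ_j)^{k_j} · ( Σ_{i=1}^m a_i·S_i(0)·D_i^{k_0+…+k_{i−1}}·U_i^{k_i+…+k_m} − K )^+. -/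

import Mathlib

/-!
For supermodular `f` on `𝓛`, supermodularity along the chain `∅ = μ₀ ⊆ μ₁ ⊆ ⋯ ⊆ μₘ` gives
`f S ≤ f ∅ + ∑_{i ∈ S} (f μᵢ₊₁ - f μᵢ)`, with equality on the chain. Integrated against any
`x ∈ M₁(b)` the right-hand side only sees the moments `bᵢ`, and `q*`, which lives on the chain,
attains it; so `q*` maximises `E_x f` over `M₁(b)`. Conditioning on the first period and inducting
on `n` extends this to fibrewise supermodular payoffs on `𝓛ⁿ`, with maximiser `q*^{⊗n} ∈ M_n(b)`.
The basket call is fibrewise supermodular, being the positive part of a monotone modular function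
of each coordinate, and its `q*^{⊗n}`-expectation becomes the multinomial sum once the paths on the
chain are grouped by how often each `μⱼ` occurs.
-/

noncomputable section

open Finset

/-- `ℓ_i` : indicator of `i ∈ S`. -/
def ell {m : ℕ} (i : Fin m) (S : Finset (Fin m)) : ℝ := if i ∈ S then 1 else 0

/-- `μ_j = {1,…,j}` (the first `j` elements of `Fin m`). -/
def mu (m j : ℕ) : Finset (Fin m) := Finset.univ.filter fun i => (i : ℕ) < j

/-- paper `b_j` for `j = 0,…,m`, with `b_0 = 1` (and `0` beyond `m`). -/
def bpaper {m : ℕ} (b : Fin m → ℝ) (j : ℕ) : ℝ :=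
  if j = 0 then 1 else if h : j - 1 < m then b ⟨j - 1, h⟩ else 0

/-- the upper supermodular vertex measure `q*`:
`q*(μ_j) = b_j − b_{j+1}` for `0 ≤ j ≤ m−1`, `q*(μ_m) = b_m`, and `q* = 0` elsewhere. -/
def qStar {m : ℕ} (b : Fin m → ℝ) (S : Finset (Fin m)) : ℝ :=
  ∑ j ∈ Finset.range (m + 1), if S = mu m j then bpaper b j - bpaper b (j + 1) else 0

/-- the lower supermodular vertex measure `q_*`:
`q_*(∅) = 1 − Σᵢ bᵢ`, `q_*({i}) = bᵢ`, and `q_* = 0` elsewhere. -/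
def qLow {m : ℕ} (b : Fin m → ℝ) (S : Finset (Fin m)) : ℝ :=
  if S = ∅ then 1 - ∑ i, b i else ∑ i : Fin m, if S = {i} then b i else 0

/-- membership in `M_1(b)`: a probability function with `E_x(ℓ_i) = b_i` for all `i`. -/
def MemM1 {m : ℕ} (b : Fin m → ℝ) (x : Finset (Fin m) → ℝ) : Prop :=
  (∀ S, 0 ≤ x S) ∧ (∑ S, x S = 1) ∧ (∀ i, ∑ S, ell i S * x S = b i)

/-- membership in `M_n(b)`: a probability function on `𝓛^n` satisfying, for every step `k`,
every prefix `λ` and every `i`, the conditional moment condition. -/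
def MemMn {m n : ℕ} (b : Fin m → ℝ) (x : (Fin n → Finset (Fin m)) → ℝ) : Prop :=
  (∀ ω, 0 ≤ x ω) ∧ (∑ ω, x ω = 1) ∧
  (∀ (k : Fin n) (lam : Fin n → Finset (Fin m)) (i : Fin m),
    (∑ ω, if ∀ j : Fin n, j < k → ω j = lam j then ell i (ω k) * x ω else 0) =
      b i * ∑ ω, if ∀ j : Fin n, j < k → ω j = lam j then x ω else 0)

/-- supermodular function on `𝓛`. -/
def Supermod {m : ℕ} (f : Finset (Fin m) → ℝ) : Prop :=
  ∀ S T, f S + f T ≤ f (S ∪ T) + f (S ∩ T)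

/-- fibrewise supermodular function on `𝓛^n`. -/
def FibSupermod {m n : ℕ} (f : (Fin n → Finset (Fin m)) → ℝ) : Prop :=
  ∀ (k : Fin n) (lam : Fin n → Finset (Fin m)),
    Supermod fun S => f (Function.update lam k S)

/-- the product measure `q^{⊗n}`. -/
def prodM {m n : ℕ} (q : Finset (Fin m) → ℝ) (ω : Fin n → Finset (Fin m)) : ℝ :=
  ∏ k, q (ω k)

section VertexMeasure

variable {m : ℕ} {b : Fin m → ℝ}

lemma mem_mu {i : Fin m} {j : ℕ} : i ∈ mu m j ↔ (i : ℕ) < j := by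
  simp [mu]

lemma mu_zero : mu m 0 = ∅ := by
  ext i
  simp [mem_mu]

lemma mu_self : mu m m = univ := by
  ext i
  simp [mem_mu]

lemma mu_succ {j : ℕ} (hj : j < m) : mu m (j + 1) = insert ⟨j, hj⟩ (mu m j) := by
  ext i
  simp only [mem_mu, mem_insert, Fin.ext_iff]
  omega

lemma eq_of_mu_eq {j j' : ℕ} (hj : j ≤ m) (hj' : j' ≤ m) (h : mu m j = mu m j') : j = j' := by
  have hcard := congrArg card h
  simp only [mu, Fin.card_filter_val_lt] at hcard
  omega

lemma bpaper_succ (j : ℕ) : bpaper b (j + 1) = if h : j < m then b ⟨j, h⟩ else 0 := by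
  simp [bpaper]

lemma antitone_bpaper (hb0 : ∀ i, 0 ≤ b i) (hb1 : ∀ i, b i ≤ 1) (hmono : Antitone b) :
    Antitone (bpaper b) := by
  refine antitone_nat_of_succ_le fun j => ?_
  rw [bpaper_succ]
  cases j with
  | zero => split <;> simp [bpaper, hb1]
  | succ j =>
    rw [bpaper_succ]
    split_ifs
    · exact hmono (Fin.mk_le_mk.2 j.le_succ)
    · omega
    · exact hb0 _
    · exact le_rfl

lemma qStar_nonneg (hb0 : ∀ i, 0 ≤ b i) (hb1 : ∀ i, b i ≤ 1) (hmono : Antitone b)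
    (S : Finset (Fin m)) : 0 ≤ qStar b S :=
  sum_nonneg fun j _ => by
    split
    · exact sub_nonneg.2 (antitone_bpaper hb0 hb1 hmono j.le_succ)
    · exact le_rfl

lemma qStar_mu {j : ℕ} (hj : j ≤ m) : qStar b (mu m j) = bpaper b j - bpaper b (j + 1) := by
  rw [qStar, sum_eq_single_of_mem j (mem_range.2 (Nat.lt_succ_of_le hj)), if_pos rfl]
  intro j' hj' hne
  rw [if_neg fun h => hne (eq_of_mu_eq hj (Nat.lt_succ_iff.1 (mem_range.1 hj')) h).symm]

lemma qStar_eq_sum_ite (S : Finset (Fin m)) :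
    qStar b S = ∑ j : Fin (m + 1), if S = mu m j then qStar b (mu m j) else 0 := by
  rw [qStar, ← Fin.sum_univ_eq_sum_range (fun j => if S = mu m j then _ else 0)]
  refine sum_congr rfl fun j _ => ?_
  split_ifs
  · rw [qStar_mu (Nat.lt_succ_iff.1 j.isLt)]
  · rfl

lemma sum_range_succ_sub_mul {R : Type*} [CommRing R] (w g : ℕ → R) (N : ℕ) :
    ∑ j ∈ range (N + 1), (w j - w (j + 1)) * g j =
      w 0 * g 0 + ∑ j ∈ range N, w (j + 1) * (g (j + 1) - g j) - w (N + 1) * g N := by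
  induction N with
  | zero => simp only [zero_add, sum_range_one, range_zero, sum_empty]; ring
  | succ N ih => rw [sum_range_succ, ih, sum_range_succ]; ring

lemma sum_mul_qStar (f : Finset (Fin m) → ℝ) :
    ∑ S, f S * qStar b S = f ∅ + ∑ i : Fin m, (f (mu m (i + 1)) - f (mu m i)) * b i := by
  have on_chain : ∑ S, f S * qStar b S =
      ∑ j ∈ range (m + 1), (bpaper b j - bpaper b (j + 1)) * f (mu m j) := by
    simp only [qStar, mul_sum, mul_ite, mul_zero]
    rw [sum_comm]
    refine sum_congr rfl fun j _ => ?_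
    rw [sum_ite_eq', if_pos (mem_univ _), mul_comm]
  rw [on_chain, sum_range_succ_sub_mul, ← Fin.sum_univ_eq_sum_range
    (fun j => bpaper b (j + 1) * (f (mu m (j + 1)) - f (mu m j)))]
  simp [bpaper, mu_zero, mul_comm]

lemma sum_qStar : ∑ S, qStar b S = 1 := by
  simpa using sum_mul_qStar (b := b) fun _ => 1

lemma sum_ell_mul_qStar (i : Fin m) : ∑ S, ell i S * qStar b S = b i := by
  rw [sum_mul_qStar]
  have increment : ∀ i' : Fin m,
      ell i (mu m (i' + 1)) - ell i (mu m i') = if i' = i then 1 else 0 := by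
    intro i'
    simp only [ell, mem_mu, Fin.ext_iff]
    split_ifs <;> (try norm_num) <;> omega
  simp only [increment, ite_mul, one_mul, zero_mul, sum_ite_eq', mem_univ, if_true]
  simp [ell]

end VertexMeasure

section OnePeriod

variable {m : ℕ} {b : Fin m → ℝ} {f : Finset (Fin m) → ℝ}

lemma Supermod.le_add_sum_increments (hf : Supermod f) (S : Finset (Fin m)) :
    f S ≤ f ∅ + ∑ i ∈ S, (f (mu m (i + 1)) - f (mu m i)) := by
  suffices h : ∀ j ≤ m,
      f (S ∩ mu m j) ≤ f ∅ + ∑ i ∈ S ∩ mu m j, (f (mu m (i + 1)) - f (mu m i)) by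
    simpa [mu_self] using h m le_rfl
  intro j hj
  induction j with
  | zero => simp [mu_zero]
  | succ j ih =>
    have hjm : j < m := hj
    set a : Fin m := ⟨j, hjm⟩
    have ha : a ∉ mu m j := by simp [a, mem_mu]
    rw [mu_succ hjm]
    by_cases haS : a ∈ S
    · have hsup := hf (insert a (S ∩ mu m j)) (mu m j)
      rw [insert_union, union_eq_right.2 inter_subset_right, insert_inter_of_notMem ha,
        inter_assoc, inter_self, ← mu_succ hjm] at hsup
      rw [inter_insert_of_mem haS, sum_insert fun h => ha (mem_inter.1 h).2]
      linarith [ih hjm.le]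
    · rw [inter_insert_of_notMem haS]
      exact ih hjm.le

lemma Supermod.sum_mul_le (hf : Supermod f) {x : Finset (Fin m) → ℝ} (hx : ∀ S, 0 ≤ x S)
    (hmom : ∀ i, ∑ S, ell i S * x S = b i * ∑ S, x S) :
    ∑ S, f S * x S ≤ (∑ S, x S) * ∑ S, f S * qStar b S := by
  set Δ : Fin m → ℝ := fun i => f (mu m (i + 1)) - f (mu m i)
  have hsum_mem : ∀ S : Finset (Fin m), ∑ i ∈ S, Δ i = ∑ i, ell i S * Δ i := fun S => by
    simp [ell, ite_mul, sum_ite_mem]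
  calc ∑ S, f S * x S ≤ ∑ S, (f ∅ + ∑ i, ell i S * Δ i) * x S :=
        sum_le_sum fun S _ => by
          rw [← hsum_mem]
          exact mul_le_mul_of_nonneg_right (hf.le_add_sum_increments S) (hx S)
    _ = f ∅ * ∑ S, x S + ∑ i, Δ i * ∑ S, ell i S * x S := by
        simp only [add_mul, sum_add_distrib, mul_sum, sum_mul]
        rw [sum_comm]
        congr 1
        exact sum_congr rfl fun i _ => sum_congr rfl fun S _ => by ring
    _ = (∑ S, x S) * ∑ S, f S * qStar b S := by
        rw [sum_mul_qStar, mul_add, mul_comm (f ∅), mul_sum]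
        congr 1
        refine sum_congr rfl fun i _ => ?_
        rw [hmom]
        ring

end OnePeriod

section MultiPeriod

lemma sum_pi_fin_succ {β M : Type*} [Fintype β] [AddCommMonoid M] {n : ℕ}
    (F : (Fin (n + 1) → β) → M) :
    ∑ ω, F ω = ∑ S, ∑ τ : Fin n → β, F (Fin.cons S τ) := by
  rw [← (Fin.consEquiv fun _ => β).sum_comp, Fintype.sum_prod_type]
  rfl

lemma sum_prefix_zero {β M : Type*} [Fintype β] [DecidableEq β] [AddCommMonoid M] {n : ℕ}
    (F : (Fin (n + 1) → β) → M) (lam : Fin (n + 1) → β) :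
    (∑ ω, if ∀ j : Fin (n + 1), j < 0 → ω j = lam j then F ω else 0) = ∑ ω, F ω := by
  simp

lemma sum_prefix_succ {β M : Type*} [Fintype β] [DecidableEq β] [AddCommMonoid M] {n : ℕ}
    (F : (Fin (n + 1) → β) → M) (k : Fin n) (lam : Fin (n + 1) → β) :
    (∑ ω, if ∀ j : Fin (n + 1), j < k.succ → ω j = lam j then F ω else 0) =
      ∑ τ, if ∀ j : Fin n, j < k → τ j = Fin.tail lam j then F (Fin.cons (lam 0) τ) else 0 := by
  have prefix_cons : ∀ S (τ : Fin n → β),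
      (∀ j : Fin (n + 1), j < k.succ → (Fin.cons S τ : Fin (n + 1) → _) j = lam j) ↔
        S = lam 0 ∧ ∀ j : Fin n, j < k → τ j = Fin.tail lam j := by
    intro S τ
    simp [Fin.forall_fin_succ, Fin.succ_pos, Fin.tail]
  simp only [sum_pi_fin_succ (fun ω => if _ then F ω else 0), prefix_cons, ite_and]
  rw [sum_comm]
  simp only [sum_ite_eq', mem_univ, if_true]

variable {m n : ℕ} {b : Fin m → ℝ}

/-- The third clause of `MemMn`; without normalisation it passes to the branches
`P (Fin.cons S ·)` of the first period. -/
def HasCondMoments (b : Fin m → ℝ) (P : (Fin n → Finset (Fin m)) → ℝ) : Prop :=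
  ∀ (k : Fin n) (lam : Fin n → Finset (Fin m)) (i : Fin m),
    (∑ ω, if ∀ j : Fin n, j < k → ω j = lam j then ell i (ω k) * P ω else 0) =
      b i * ∑ ω, if ∀ j : Fin n, j < k → ω j = lam j then P ω else 0

lemma HasCondMoments.const_mul {P : (Fin n → Finset (Fin m)) → ℝ} (hP : HasCondMoments b P)
    (c : ℝ) : HasCondMoments b fun ω => c * P ω := by
  intro k lam i
  have pull : ∀ g : (Fin n → Finset (Fin m)) → ℝ,
      (∑ ω, if ∀ j : Fin n, j < k → ω j = lam j then c * g ω else 0) =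
        c * ∑ ω, if ∀ j : Fin n, j < k → ω j = lam j then g ω else 0 := fun g => by
    simp only [mul_sum, mul_ite_zero]
  simp_rw [mul_left_comm _ c]
  rw [pull, pull, hP k lam i, mul_left_comm]

lemma hasCondMoments_succ_iff {P : (Fin (n + 1) → Finset (Fin m)) → ℝ} :
    HasCondMoments b P ↔
      (∀ i, ∑ S, ell i S * ∑ τ, P (Fin.cons S τ) = b i * ∑ S, ∑ τ, P (Fin.cons S τ)) ∧
        ∀ S, HasCondMoments b fun τ => P (Fin.cons S τ) := by
  constructor
  · intro hP
    refine ⟨fun i => ?_, fun S k lam i => ?_⟩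
    · have h := hP 0 (fun _ => ∅) i
      simp only [sum_prefix_zero, sum_pi_fin_succ (fun ω => ell i (ω 0) * P ω),
        sum_pi_fin_succ P, Fin.cons_zero] at h
      simpa only [mul_sum] using h
    · have h := hP k.succ (Fin.cons S lam) i
      simpa only [sum_prefix_succ, Fin.cons_zero, Fin.tail_cons, Fin.cons_succ] using h
  · rintro ⟨h_first, h_cons⟩ k lam i
    cases k using Fin.cases with
    | zero =>
      simp only [sum_prefix_zero, sum_pi_fin_succ (fun ω => ell i (ω 0) * P ω),
        sum_pi_fin_succ P, Fin.cons_zero]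
      simpa only [mul_sum] using h_first i
    | succ k =>
      simpa only [sum_prefix_succ, Fin.cons_succ] using h_cons (lam 0) k (Fin.tail lam) i

lemma supermod_sum_mul {ι : Type*} (s : Finset ι) {g : ι → Finset (Fin m) → ℝ} {w : ι → ℝ}
    (hg : ∀ t, Supermod (g t)) (hw : ∀ t, 0 ≤ w t) :
    Supermod fun S => ∑ t ∈ s, g t S * w t := by
  intro S T
  simp only [← sum_add_distrib, ← add_mul]
  exact sum_le_sum fun t _ => mul_le_mul_of_nonneg_right (hg t S T) (hw t)

lemma FibSupermod.supermod_cons {X : (Fin (n + 1) → Finset (Fin m)) → ℝ} (hX : FibSupermod X)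
    (τ : Fin n → Finset (Fin m)) : Supermod fun S => X (Fin.cons S τ) := by
  simpa only [Fin.update_cons_zero] using hX 0 (Fin.cons ∅ τ)

lemma FibSupermod.comp_cons {X : (Fin (n + 1) → Finset (Fin m)) → ℝ} (hX : FibSupermod X)
    (S : Finset (Fin m)) : FibSupermod fun τ => X (Fin.cons S τ) := fun k lam => by
  simpa only [Fin.cons_update] using hX k.succ (Fin.cons S lam)

lemma prodM_cons (q : Finset (Fin m) → ℝ) (S : Finset (Fin m)) (τ : Fin n → Finset (Fin m)) :
    prodM q (Fin.cons S τ) = q S * prodM q τ := by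
  simp [prodM, Fin.prod_univ_succ]

lemma prodM_nonneg {q : Finset (Fin m) → ℝ} (hq : ∀ S, 0 ≤ q S) (ω : Fin n → Finset (Fin m)) :
    0 ≤ prodM q ω :=
  prod_nonneg fun k _ => hq (ω k)

theorem sum_mul_le_sum_mul_prodM_qStar (hq : ∀ S, 0 ≤ qStar b S)
    {X : (Fin n → Finset (Fin m)) → ℝ} (hX : FibSupermod X)
    {P : (Fin n → Finset (Fin m)) → ℝ} (hP0 : ∀ ω, 0 ≤ P ω) (hP : HasCondMoments b P) :
    ∑ ω, X ω * P ω ≤ (∑ ω, P ω) * ∑ ω, X ω * prodM (qStar b) ω := by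
  induction n with
  | zero => simp [prodM, mul_comm]
  | succ n ih =>
    obtain ⟨hP_first, hP_cons⟩ := hasCondMoments_succ_iff.1 hP
    set x : Finset (Fin m) → ℝ := fun S => ∑ τ, P (Fin.cons S τ)
    set Y : Finset (Fin m) → ℝ := fun S => ∑ τ, X (Fin.cons S τ) * prodM (qStar b) τ
    have hY : Supermod Y := supermod_sum_mul _ hX.supermod_cons (prodM_nonneg hq)
    calc ∑ ω, X ω * P ω = ∑ S, ∑ τ, X (Fin.cons S τ) * P (Fin.cons S τ) := sum_pi_fin_succ _
      _ ≤ ∑ S, Y S * x S := sum_le_sum fun S _ =>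
          (ih (hX.comp_cons S) (fun τ => hP0 _) (hP_cons S)).trans_eq (mul_comm _ _)
      _ ≤ (∑ S, x S) * ∑ S, Y S * qStar b S :=
          hY.sum_mul_le (fun S => sum_nonneg fun τ _ => hP0 _) hP_first
      _ = (∑ ω, P ω) * ∑ ω, X ω * prodM (qStar b) ω := by
          rw [sum_pi_fin_succ P, sum_pi_fin_succ fun ω => X ω * prodM _ ω]
          congr 1
          simp only [Y, prodM_cons, sum_mul]
          exact sum_congr rfl fun S _ => sum_congr rfl fun τ _ => by ring

lemma sum_prodM (q : Finset (Fin m) → ℝ) :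
    ∑ ω : Fin n → Finset (Fin m), prodM q ω = (∑ S, q S) ^ n := by
  simp only [prodM, ← Fintype.prod_sum, prod_const, card_univ, Fintype.card_fin]

lemma hasCondMoments_prodM {q : Finset (Fin m) → ℝ}
    (hq : ∀ i, ∑ S, ell i S * q S = b i * ∑ S, q S) :
    HasCondMoments b (prodM q : (Fin n → Finset (Fin m)) → ℝ) := by
  induction n with
  | zero => exact fun k => k.elim0
  | succ n ih =>
    refine hasCondMoments_succ_iff.2 ⟨fun i => ?_, fun S => ?_⟩
    · simp only [prodM_cons, ← mul_sum, ← mul_assoc, ← sum_mul, hq i]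
    · simpa only [prodM_cons] using ih.const_mul (q S)

lemma memMn_prodM_qStar (hq : ∀ S, 0 ≤ qStar b S) :
    MemMn b (prodM (qStar b) : (Fin n → Finset (Fin m)) → ℝ) :=
  ⟨prodM_nonneg hq, by rw [sum_prodM, sum_qStar, one_pow],
    hasCondMoments_prodM fun i => by rw [sum_ell_mul_qStar, sum_qStar, mul_one]⟩

end MultiPeriod

section BasketCall

variable {m n : ℕ}

def basketCall (c D U : Fin m → ℝ) (K : ℝ) (ω : Fin n → Finset (Fin m)) : ℝ :=
  max (∑ i, c i * ∏ k, (if i ∈ ω k then U i else D i) - K) 0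

lemma max_sub_add_max_sub_le {p q r s K : ℝ} (hsum : p + q = r + s) (hp : p ≤ s) (hq : q ≤ s) :
    max (p - K) 0 + max (q - K) 0 ≤ max (s - K) 0 + max (r - K) 0 := by
  simp only [max_def]
  split_ifs <;> linarith

lemma supermod_max_sub {g : Finset (Fin m) → ℝ} (hmod : ∀ S T, g S + g T = g (S ∩ T) + g (S ∪ T))
    (hg : Monotone g) (K : ℝ) : Supermod fun S => max (g S - K) 0 := fun S T =>
  max_sub_add_max_sub_le (hmod S T) (hg subset_union_left) (hg subset_union_right)

lemma fibSupermod_basketCall {c D U : Fin m → ℝ} (hc : ∀ i, 0 ≤ c i) (hD : ∀ i, 0 ≤ D i)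
    (hDU : ∀ i, D i ≤ U i) (K : ℝ) :
    FibSupermod (basketCall c D U K : (Fin n → Finset (Fin m)) → ℝ) := by
  intro k lam
  set w : Fin m → ℝ := fun i => c i * ∏ k' ∈ univ \ {k}, (if i ∈ lam k' then U i else D i)
  have hw : ∀ i, 0 ≤ w i := fun i =>
    mul_nonneg (hc i) (prod_nonneg fun _ _ => by split <;> linarith [hD i, hDU i])
  have fibre : ∀ S, ∑ i, c i * ∏ k', (if i ∈ Function.update lam k S k' then U i else D i) =
      ∑ i, w i * (if i ∈ S then U i else D i) := fun S => by
    refine sum_congr rfl fun i _ => ?_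
    rw [prod_congr rfl fun k' _ => Function.apply_update (fun _ T => if i ∈ T then U i else D i)
      lam k S k', prod_update_of_mem (mem_univ k)]
    ring
  simp only [basketCall, fibre]
  refine supermod_max_sub (fun S T => ?_) (fun S T hST => ?_) K
  · simp only [← sum_add_distrib]
    refine sum_congr rfl fun i _ => ?_
    by_cases hS : i ∈ S <;> by_cases hT : i ∈ T <;> simp [hS, hT, add_comm]
  · refine sum_le_sum fun i _ => mul_le_mul_of_nonneg_left ?_ (hw i)
    by_cases hS : i ∈ S
    · simp [hS, hST hS]
    · split_ifs <;> linarith [hDU i]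

def fiberCard {ι α : Type*} [Fintype ι] [DecidableEq α] (c : ι → α) (j : α) : ℕ :=
  #{k | c k = j}

lemma sum_pi_single_eq_fiberCard {ι α : Type*} [Fintype ι] [DecidableEq α] (c : ι → α) :
    ∑ k, Pi.single (c k) 1 = fiberCard c := by
  ext j
  simp only [Finset.sum_apply, Pi.single_apply, fiberCard, card_filter, eq_comm]

lemma prod_comp_eq_prod_pow_fiberCard {ι α M : Type*} [Fintype ι] [Fintype α] [DecidableEq α]
    [CommMonoid M] (f : α → M) (c : ι → α) :
    ∏ k, f (c k) = ∏ j, f j ^ fiberCard c j := by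
  rw [← prod_fiberwise univ c fun k => f (c k)]
  refine prod_congr rfl fun j _ => ?_
  rw [prod_congr rfl fun k hk => congrArg f (mem_filter.1 hk).2, prod_const]
  rfl

/-- Counting tuples by their fibre cardinalities: the multinomial theorem in the monoid algebra
of `α → ℕ`, read through the linear functional `single kk r ↦ r * G kk`. -/
theorem sum_comp_fiberCard {α : Type*} [Fintype α] [DecidableEq α] (n : ℕ)
    (G : (α → ℕ) → ℝ) :
    ∑ c : Fin n → α, G (fiberCard c) =
      ∑ kk ∈ univ.piAntidiag n, (Nat.multinomial univ kk : ℝ) * G kk := by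
  let x : α → AddMonoidAlgebra ℝ (α → ℕ) := fun j => .single (Pi.single j 1) 1
  let L : AddMonoidAlgebra ℝ (α → ℕ) →+ ℝ := (Finsupp.linearCombination ℝ G).toAddMonoidHom.comp
    AddMonoidAlgebra.coeffAddEquiv.toAddMonoidHom
  have hL : ∀ kk r, L (.single kk r) = r * G kk := fun kk r => by
    simp [L, Finsupp.linearCombination_single]
  have by_tuples : (∑ j, x j) ^ n = ∑ c : Fin n → α, .single (fiberCard c) 1 := by
    rw [← Fin.prod_const, Fintype.prod_sum]
    refine sum_congr rfl fun c _ => ?_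
    rw [AddMonoidAlgebra.prod_single, sum_pi_single_eq_fiberCard, prod_const_one]
  have by_counts : (∑ j, x j) ^ n =
      ∑ kk ∈ univ.piAntidiag n, .single kk (Nat.multinomial univ kk : ℝ) := by
    rw [sum_pow_eq_sum_piAntidiag]
    refine sum_congr rfl fun kk _ => ?_
    have hkk : ∑ j, kk j • (Pi.single j 1 : α → ℕ) = kk := by
      ext j
      simp [Finset.sum_apply, Pi.single_apply]
    simp only [x, AddMonoidAlgebra.single_pow, AddMonoidAlgebra.prod_single, one_pow,
      prod_const_one, hkk]
    rw [← nsmul_eq_mul, AddMonoidAlgebra.smul_single, nsmul_one]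
  simpa only [map_sum, hL, one_mul] using congrArg L (by_tuples.symm.trans by_counts)

lemma sum_mul_prodM_eq_sum_comp {β : Type*} [Fintype β] (e : β → Finset (Fin m)) (w : β → ℝ)
    {q : Finset (Fin m) → ℝ} (hq : ∀ S, q S = ∑ j, if S = e j then w j else 0)
    (h : (Fin n → Finset (Fin m)) → ℝ) :
    ∑ ω, h ω * prodM q ω = ∑ c : Fin n → β, h (e ∘ c) * ∏ k, w (c k) := by
  simp only [prodM, hq, Fintype.prod_sum, prod_ite_zero, mul_sum]
  rw [sum_comm]
  refine sum_congr rfl fun c _ => ?_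
  have on_graph : ∀ ω : Fin n → Finset (Fin m), (∀ k ∈ univ, ω k = e (c k)) ↔ ω = e ∘ c :=
    fun ω => by simp [funext_iff]
  simp only [on_graph, mul_ite, mul_zero]
  simp

lemma prod_ite_mem_mu (D U : Fin m → ℝ) (i : Fin m) (c : Fin n → Fin (m + 1)) :
    ∏ k, (if i ∈ mu m (c k) then U i else D i) =
      D i ^ (∑ j : Fin (m + 1), if (j : ℕ) ≤ (i : ℕ) then fiberCard c j else 0) *
        U i ^ (∑ j : Fin (m + 1), if (i : ℕ) < (j : ℕ) then fiberCard c j else 0) := by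
  simp only [mem_mu]
  rw [prod_comp_eq_prod_pow_fiberCard (fun j : Fin (m + 1) => if (i : ℕ) < j then U i else D i),
    ← prod_pow_eq_pow_sum, ← prod_pow_eq_pow_sum, ← prod_mul_distrib]
  refine prod_congr rfl fun j _ => ?_
  split_ifs <;> first | omega | simp

lemma cast_multinomial_eq_div {α : Type*} [Fintype α] {n : ℕ} {kk : α → ℕ} (hkk : ∑ j, kk j = n) :
    (Nat.multinomial univ kk : ℝ) = n.factorial / ∏ j, ((kk j).factorial : ℝ) := by
  rw [eq_div_iff (by positivity), mul_comm, ← hkk]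
  exact_mod_cast Nat.multinomial_spec univ kk

theorem sum_basketCall_mul_prodM_qStar (b c D U : Fin m → ℝ) (K : ℝ) :
    ∑ ω : Fin n → Finset (Fin m), basketCall c D U K ω * prodM (qStar b) ω =
      ∑ kk ∈ Finset.Nat.antidiagonalTuple (m + 1) n,
        ((n.factorial : ℝ) / ∏ j : Fin (m + 1), ((kk j).factorial : ℝ)) *
        (∏ j : Fin (m + 1), qStar b (mu m (j : ℕ)) ^ kk j) *
        max (∑ i : Fin m, c i *
            D i ^ (∑ j : Fin (m + 1), if (j : ℕ) ≤ (i : ℕ) then kk j else 0) *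
            U i ^ (∑ j : Fin (m + 1), if (i : ℕ) < (j : ℕ) then kk j else 0) - K) 0 := by
  rw [sum_mul_prodM_eq_sum_comp (fun j : Fin (m + 1) => mu m j) _ qStar_eq_sum_ite]
  simp only [basketCall, Function.comp_apply, prod_ite_mem_mu,
    prod_comp_eq_prod_pow_fiberCard fun j : Fin (m + 1) => qStar b (mu m j)]
  rw [← piAntidiag_univ_fin_eq_antidiagonalTuple]
  refine (sum_comp_fiberCard n fun kk => max (∑ i : Fin m, c i *
      (D i ^ (∑ j : Fin (m + 1), if (j : ℕ) ≤ (i : ℕ) then kk j else 0) *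
        U i ^ (∑ j : Fin (m + 1), if (i : ℕ) < (j : ℕ) then kk j else 0)) - K) 0 *
      ∏ j : Fin (m + 1), qStar b (mu m j) ^ kk j).trans (sum_congr rfl fun kk hkk => ?_)
  rw [cast_multinomial_eq_div (mem_piAntidiag.1 hkk).1]
  simp only [mul_assoc]
  ring

end BasketCall

theorem basket_call_upper_bound_general {m n : ℕ}
    (D U S0 a : Fin m → ℝ) (R K : ℝ)
    (hD : ∀ i, 0 < D i) (hDR : ∀ i, D i < R) (hRU : ∀ i, R < U i)
    (hS0 : ∀ i, 0 < S0 i) (ha : ∀ i, 0 ≤ a i)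
    (hmono : ∀ i j : Fin m, i ≤ j →
      (R - D j) / (U j - D j) ≤ (R - D i) / (U i - D i)) :
    IsGreatest
      {v : ℝ | ∃ P, MemMn (fun i => (R - D i) / (U i - D i)) P ∧
        v = ∑ ω : Fin n → Finset (Fin m),
          max (∑ i, a i * S0 i * ∏ k : Fin n, (if i ∈ ω k then U i else D i) - K) 0 * P ω}
      (∑ kk ∈ Finset.Nat.antidiagonalTuple (m + 1) n,
        ((n.factorial : ℝ) / ∏ j : Fin (m + 1), ((kk j).factorial : ℝ)) *
        (∏ j : Fin (m + 1),
          qStar (fun i => (R - D i) / (U i - D i)) (mu m (j : ℕ)) ^ kk j) *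
        max (∑ i : Fin m, a i * S0 i *
            D i ^ (∑ j : Fin (m + 1), if (j : ℕ) ≤ (i : ℕ) then kk j else 0) *
            U i ^ (∑ j : Fin (m + 1), if (i : ℕ) < (j : ℕ) then kk j else 0) - K) 0) := by
  have hUD : ∀ i, 0 < U i - D i := fun i => by linarith [hDR i, hRU i]
  have hq : ∀ S, 0 ≤ qStar (fun i => (R - D i) / (U i - D i)) S :=
    qStar_nonneg (fun i => div_nonneg (by linarith [hDR i]) (hUD i).le)
      (fun i => (div_le_one (hUD i)).2 (by linarith [hRU i])) hmono
  have hX : FibSupermod (basketCall (fun i => a i * S0 i) D U K : (Fin n → _) → ℝ) :=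
    fibSupermod_basketCall (fun i => mul_nonneg (ha i) (hS0 i).le) (fun i => (hD i).le)
      (fun i => ((hDR i).trans (hRU i)).le) K
  have hvalue := sum_basketCall_mul_prodM_qStar (n := n) (fun i => (R - D i) / (U i - D i))
    (fun i => a i * S0 i) D U K
  refine ⟨⟨_, memMn_prodM_qStar hq, hvalue.symm⟩, ?_⟩
  rintro v ⟨P, hP, rfl⟩
  calc _ ≤ (∑ ω, P ω) * ∑ ω, basketCall (fun i => a i * S0 i) D U K ω *
          prodM (qStar fun i => (R - D i) / (U i - D i)) ω :=
        sum_mul_le_sum_mul_prodM_qStar hq hX hP.1 hP.2.2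
    _ = _ := by rw [hP.2.1, one_mul, hvalue]

/-- explicit multinomial formula for the upper bound of the no-arbitrage
price interval of a European basket call, where `b_i = (R − D_i)/(U_i − D_i)`. -/
theorem basket_call_upper_bound {m n : ℕ} (hm : 0 < m) (hn : 0 < n)
    (D U S0 a : Fin m → ℝ) (R K : ℝ)
    (hD : ∀ i, 0 < D i) (hDR : ∀ i, D i < R) (hRU : ∀ i, R < U i)
    (hS0 : ∀ i, 0 < S0 i) (ha : ∀ i, 0 ≤ a i) (hK : 0 ≤ K)
    (hmono : ∀ i j : Fin m, i ≤ j →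
      (R - D j) / (U j - D j) ≤ (R - D i) / (U i - D i)) :
    IsGreatest
      {v : ℝ | ∃ P, MemMn (fun i => (R - D i) / (U i - D i)) P ∧
        v = ∑ ω : Fin n → Finset (Fin m),
          max (∑ i, a i * S0 i * ∏ k : Fin n, (if i ∈ ω k then U i else D i) - K) 0 * P ω}
      (∑ kk ∈ Finset.Nat.antidiagonalTuple (m + 1) n,
        ((n.factorial : ℝ) / ∏ j : Fin (m + 1), ((kk j).factorial : ℝ)) *
        (∏ j : Fin (m + 1),
          qStar (fun i => (R - D i) / (U i - D i)) (mu m (j : ℕ)) ^ kk j) *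
        max (∑ i : Fin m, a i * S0 i *
            D i ^ (∑ j : Fin (m + 1), if (j : ℕ) ≤ (i : ℕ) then kk j else 0) *
            U i ^ (∑ j : Fin (m + 1), if (i : ℕ) < (j : ℕ) then kk j else 0) - K) 0) :=
  basket_call_upper_bound_general D U S0 a R K hD hDR hRU hS0 ha hmono
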